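/- arXiv:2006.02890 — 2 statements merged into one kernel-verified Lean document; each statement's English description precedes it below -/
import Mathlib

section
/- Let Ψ ∈ ℝ^{m×n}, y ∈ ℝᵐ, s ≥ 1, x̃ ∈ ℝⁿ with ‖x̃‖₀ ≤ s, and R = y − Ψx̃. Suppose C > 0 is such that for every vector v ∈ ℝⁿ with ‖v‖₀ ≤ 2s, (1/m)‖Ψv‖₂² ≥ C‖v‖₂². If x̂ minimizes (1/(2m))‖y − Ψx‖₂² over {x : ‖x‖₀ ≤ s}, then ‖x̂ − x̃‖₂ ≤ (2√(2s)/C)·‖ΨᵀR/m‖_∞. -/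
/-!
With h = x̂ - x̃, which is 2s-sparse, comparing the objective at x̂ with its value at the feasible
point x̃ gives the basic inequality ‖Ψh‖² ≤ 2⟪R, Ψh⟫ = 2⟪h, ΨᵀR⟫. The restricted eigenvalue
condition bounds the left side below by m C ‖h‖², and Hölder followed by Cauchy–Schwarz on the
support of h bounds ⟪h, ΨᵀR/m⟫ by √(2s) ‖h‖₂ ‖ΨᵀR/m‖_∞. Dividing by C ‖h‖₂ gives the bound.
-/

open Finset Matrix

section

variable {ι : Type*} [Fintype ι]

lemma hammingNorm_sub_le_add {β : Type*} [AddCommGroup β] [DecidableEq β] (x y : ι → β) :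
    hammingNorm (x - y) ≤ hammingNorm x + hammingNorm y := by
  rw [← neg_add_eq_sub, ← hammingDist_eq_hammingNorm, hammingDist_comm,
    ← hammingDist_zero_right, ← hammingDist_zero_right]
  exact hammingDist_triangle_right x y 0

lemma sum_abs_le_sqrt_hammingNorm_mul_sqrt_sum_sq (h : ι → ℝ) :
    ∑ i, |h i| ≤ √(hammingNorm h) * √(∑ i, h i ^ 2) := by
  classical
  set T := univ.filter fun i => h i ≠ 0
  have hsum_abs : ∑ i, |h i| = ∑ i ∈ T, |h i| :=
    (sum_filter_of_ne fun i _ hi => abs_ne_zero.mp hi).symm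
  have hsum_sq : ∑ i ∈ T, h i ^ 2 = ∑ i, h i ^ 2 :=
    sum_filter_of_ne fun i _ hi => pow_ne_zero_iff two_ne_zero |>.mp hi
  have hCS : (∑ i ∈ T, |h i|) ^ 2 ≤ #T * ∑ i ∈ T, h i ^ 2 := by
    simpa only [sq_abs] using sq_sum_le_card_mul_sum_sq (s := T) (f := fun i => |h i|)
  rw [hsum_abs, ← Real.sqrt_mul (Nat.cast_nonneg _), ← hsum_sq,
    ← Real.sqrt_sq (sum_nonneg fun i _ => abs_nonneg (h i))]
  exact Real.sqrt_le_sqrt (by simpa [hammingNorm] using hCS)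

lemma dotProduct_le_sqrt_hammingNorm_mul (h g : ι → ℝ) :
    h ⬝ᵥ g ≤ √(hammingNorm h) * √(∑ i, h i ^ 2) * ⨆ j, |g j| := by
  have hg : ∀ i, |g i| ≤ ⨆ j, |g j| := le_ciSup (Finite.bddAbove_range _)
  calc h ⬝ᵥ g ≤ ∑ i, |h i| * ⨆ j, |g j| :=
        sum_le_sum fun i _ => (le_abs_self _).trans <| by
          rw [abs_mul]; exact mul_le_mul_of_nonneg_left (hg i) (abs_nonneg _)
    _ = (∑ i, |h i|) * ⨆ j, |g j| := (sum_mul ..).symm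
    _ ≤ _ := mul_le_mul_of_nonneg_right (sum_abs_le_sqrt_hammingNorm_mul_sqrt_sum_sq h)
        (Real.iSup_nonneg fun j => abs_nonneg (g j))

end

lemma sum_sq_le_two_mul_sum_mul_of_sum_sq_sub_le {κ : Type*} (s : Finset κ) (r u : κ → ℝ)
    (hle : ∑ i ∈ s, (r i - u i) ^ 2 ≤ ∑ i ∈ s, r i ^ 2) :
    ∑ i ∈ s, u i ^ 2 ≤ 2 * ∑ i ∈ s, r i * u i := by
  simp only [sub_sq, sum_add_distrib, sum_sub_distrib, mul_assoc, ← mul_sum] at hle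
  linarith

lemma le_div_of_mul_sq_le_mul {a K C : ℝ} (hC : 0 < C) (hK : 0 ≤ K) (h : C * a ^ 2 ≤ K * a) :
    a ≤ K / C := by
  rcases le_or_gt a 0 with ha | ha
  · exact ha.trans (div_nonneg hK hC.le)
  · rw [le_div_iff₀ hC]
    exact le_of_mul_le_mul_right (by linarith) ha

theorem l0_least_squares_error_bound_general (m n s : ℕ) (hm : 0 < m)
    (Ψ : Matrix (Fin m) (Fin n) ℝ) (y : Fin m → ℝ)
    (xtil : Fin n → ℝ)
    (hxtil : (Finset.univ.filter fun i => xtil i ≠ 0).card ≤ s)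
    (C : ℝ) (hC : 0 < C)
    (hRE : ∀ v : Fin n → ℝ, (Finset.univ.filter fun i => v i ≠ 0).card ≤ 2 * s →
      C * ∑ i, (v i) ^ 2 ≤ (1 / (m : ℝ)) * ∑ i, (Ψ.mulVec v i) ^ 2)
    (xhat : Fin n → ℝ)
    (hxhat : (Finset.univ.filter fun i => xhat i ≠ 0).card ≤ s)
    (hmin : ∀ x : Fin n → ℝ, (Finset.univ.filter fun i => x i ≠ 0).card ≤ s →
      (1 / (2 * (m : ℝ))) * ∑ i, (y i - Ψ.mulVec xhat i) ^ 2 ≤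
        (1 / (2 * (m : ℝ))) * ∑ i, (y i - Ψ.mulVec x i) ^ 2) :
    Real.sqrt (∑ i, (xhat i - xtil i) ^ 2) ≤
      (2 * Real.sqrt (2 * s) / C) *
        (⨆ j, |Ψ.transpose.mulVec (y - Ψ.mulVec xtil) j / m|) := by
  have hmR : (0 : ℝ) < m := Nat.cast_pos.mpr hm
  set R := y - Ψ *ᵥ xtil
  set h := xhat - xtil
  set g : Fin n → ℝ := fun j => (Ψᵀ *ᵥ R) j / m
  set M := ⨆ j, |g j|
  have hsparse : hammingNorm h ≤ 2 * s :=
    (hammingNorm_sub_le_add xhat xtil).trans ((add_le_add hxhat hxtil).trans_eq (two_mul s).symm)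
  have hbasic : ∑ i, (Ψ *ᵥ h) i ^ 2 ≤ 2 * ∑ i, R i * (Ψ *ᵥ h) i := by
    refine sum_sq_le_two_mul_sum_mul_of_sum_sq_sub_le _ _ _ ?_
    have hres : ∀ i, y i - (Ψ *ᵥ xhat) i = R i - (Ψ *ᵥ h) i := fun i => by
      simp only [R, h, mulVec_sub, Pi.sub_apply]; ring
    have hR : ∀ i, y i - (Ψ *ᵥ xtil) i = R i := fun i => rfl
    exact le_of_mul_le_mul_left (by simpa only [hres, hR] using hmin xtil hxtil) (by positivity)
  have hadjoint : ∑ i, R i * (Ψ *ᵥ h) i = m * (h ⬝ᵥ g) := by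
    rw [show g = (m : ℝ)⁻¹ • (Ψᵀ *ᵥ R) by ext j; simp [g, div_eq_inv_mul], dotProduct_smul,
      smul_eq_mul, mul_inv_cancel_left₀ hmR.ne', mulVec_transpose, dotProduct_comm,
      ← dotProduct_mulVec]
    rfl
  have hM : 0 ≤ M := Real.iSup_nonneg fun j => abs_nonneg (g j)
  refine div_mul_eq_mul_div _ C M ▸ le_div_of_mul_sq_le_mul hC (by positivity) ?_
  rw [Real.sq_sqrt (sum_nonneg fun i _ => sq_nonneg _)]
  calc C * ∑ i, h i ^ 2 ≤ 1 / m * ∑ i, (Ψ *ᵥ h) i ^ 2 := hRE h hsparse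
    _ ≤ 2 * (h ⬝ᵥ g) := by
      rw [div_mul_eq_mul_div, one_mul, div_le_iff₀ hmR]; linarith
    _ ≤ 2 * (√(hammingNorm h) * √(∑ i, h i ^ 2) * M) := by
      gcongr; exact dotProduct_le_sqrt_hammingNorm_mul h g
    _ ≤ 2 * (√(2 * s) * √(∑ i, h i ^ 2) * M) := by
      gcongr; exact_mod_cast hsparse
    _ = 2 * √(2 * s) * M * √(∑ i, h i ^ 2) := by ring

theorem l0_least_squares_error_bound (m n s : ℕ) (hm : 0 < m) (hs : 1 ≤ s)
    (Ψ : Matrix (Fin m) (Fin n) ℝ) (y : Fin m → ℝ)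
    (xtil : Fin n → ℝ)
    (hxtil : (Finset.univ.filter fun i => xtil i ≠ 0).card ≤ s)
    (C : ℝ) (hC : 0 < C)
    (hRE : ∀ v : Fin n → ℝ, (Finset.univ.filter fun i => v i ≠ 0).card ≤ 2 * s →
      C * ∑ i, (v i) ^ 2 ≤ (1 / (m : ℝ)) * ∑ i, (Ψ.mulVec v i) ^ 2)
    (xhat : Fin n → ℝ)
    (hxhat : (Finset.univ.filter fun i => xhat i ≠ 0).card ≤ s)
    (hmin : ∀ x : Fin n → ℝ, (Finset.univ.filter fun i => x i ≠ 0).card ≤ s →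
      (1 / (2 * (m : ℝ))) * ∑ i, (y i - Ψ.mulVec xhat i) ^ 2 ≤
        (1 / (2 * (m : ℝ))) * ∑ i, (y i - Ψ.mulVec x i) ^ 2) :
    Real.sqrt (∑ i, (xhat i - xtil i) ^ 2) ≤
      (2 * Real.sqrt (2 * s) / C) *
        (⨆ j, |Ψ.transpose.mulVec (y - Ψ.mulVec xtil) j / m|) :=
  l0_least_squares_error_bound_general m n s hm Ψ y xtil hxtil C hC hRE xhat hxhat hmin
end

section
/- Under the hypotheses of the previous lemma, if additionally ‖x − x̃‖_∞ ≥ 2‖ΨᵀR/m‖_∞ / C_*, then with r = ‖ΨᵀR/m‖_∞, the quantity t = ‖x − x̃‖_∞ satisfies (C_*/2)t² − r·t − (F(x) − F(x̃)) ≤ 0, and hence ‖x − x̃‖_∞ ≤ √(2·max(F(x) − F(x̃), 0)/C_*) + 2r/C_*. -/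
/-!
Write `d = x - x̃` and `R = y - Ψ x̃`. The gap `F(x) - F(x̃)` is `‖Ψ d‖² / (2m) - ⟨Ψᵀ R / m, d⟩`.
The curvature hypothesis bounds the first term below by `(C/2) ‖d‖₁ ‖d‖_∞` and Hölder bounds the
second by `r ‖d‖₁`. As `‖d‖₁ ≥ ‖d‖_∞` and `(C/2) ‖d‖_∞ ≥ r`, the factor `‖d‖₁` can be lowered to
`‖d‖_∞`, which leaves a quadratic inequality in `‖d‖_∞`; its larger root is at most
`√(2 max(gap, 0) / C) + 2r / C`.
-/

section QuadraticBound

variable {C r G t : ℝ}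

theorem quadratic_nonpos_of_mul_le_sub {S : ℝ} (hTS : t ≤ S) (hrt : r ≤ C / 2 * t)
    (hG : C / 2 * (S * t) - r * S ≤ G) : C / 2 * t ^ 2 - r * t - G ≤ 0 := by
  nlinarith [mul_nonneg (sub_nonneg.2 hTS) (sub_nonneg.2 hrt)]

theorem le_sqrt_add_of_quadratic_nonpos (hC : 0 < C) (hr : 0 ≤ r)
    (h : C / 2 * t ^ 2 - r * t - G ≤ 0) : t ≤ √(2 * max G 0 / C) + 2 * r / C := by
  set A := √(2 * max G 0 / C)
  have hA : 0 ≤ A := Real.sqrt_nonneg _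
  have hCA : C / 2 * A ^ 2 = max G 0 := by
    rw [Real.sq_sqrt (by positivity)]
    field_simp
  by_contra! hlt
  -- `t - A > 2r/C` makes `C/2 (t - A)(t + A)` exceed `r t`, yet it equals `C/2 t² - max G 0 ≤ r t`.
  have hgap : r < C / 2 * (t - A) := by
    have : 2 * r / C < t - A := by linarith
    rw [div_lt_iff₀ hC] at this
    linarith
  have htA : 0 < t + A := by linarith [show 0 ≤ 2 * r / C by positivity]
  nlinarith [le_max_left G 0, mul_lt_mul_of_pos_right hgap htA, mul_nonneg hr hA]

end QuadraticBound

section Vectors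

variable {ι κ : Type*} [Fintype ι] [Fintype κ]

theorem card_filter_sub_ne_zero_le [DecidableEq κ] (x x' : κ → ℝ) :
    (Finset.univ.filter fun i => (x - x') i ≠ 0).card ≤
      (Finset.univ.filter fun i => x i ≠ 0).card + (Finset.univ.filter fun i => x' i ≠ 0).card := by
  refine (Finset.card_le_card fun i hi => ?_).trans (Finset.card_union_le _ _)
  simp only [Finset.mem_filter, Finset.mem_univ, true_and, Finset.mem_union, Pi.sub_apply] at hi ⊢
  by_contra! h
  exact hi (by rw [h.1, h.2, sub_zero])

theorem iSup_abs_le_sum_abs (d : κ → ℝ) : ⨆ i, |d i| ≤ ∑ i, |d i| :=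
  Real.iSup_le (fun i => Finset.single_le_sum (fun j _ => abs_nonneg (d j)) (Finset.mem_univ i))
    (Finset.sum_nonneg fun j _ => abs_nonneg (d j))

theorem sum_mul_le_iSup_abs_mul_sum_abs (w d : κ → ℝ) :
    ∑ j, w j * d j ≤ (⨆ j, |w j|) * ∑ j, |d j| := by
  rw [Finset.mul_sum]
  refine Finset.sum_le_sum fun j _ => ?_
  calc w j * d j ≤ |w j| * |d j| := by rw [← abs_mul]; exact le_abs_self _
    _ ≤ (⨆ j, |w j|) * |d j| :=
      mul_le_mul_of_nonneg_right (le_ciSup (Finite.bddAbove_range fun j => |w j|) j) (abs_nonneg _)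

theorem sum_sq_sub_mulVec_sub_sum_sq_sub_mulVec (Ψ : Matrix ι κ ℝ) (y : ι → ℝ) (x x' : κ → ℝ) :
    ∑ i, (y i - Ψ.mulVec x i) ^ 2 - ∑ i, (y i - Ψ.mulVec x' i) ^ 2 =
      ∑ i, (Ψ.mulVec (x - x') i) ^ 2 -
        2 * ∑ j, Ψ.transpose.mulVec (y - Ψ.mulVec x') j * (x - x') j := by
  have hcross : ∑ j, Ψ.transpose.mulVec (y - Ψ.mulVec x') j * (x - x') j =
      ∑ i, (y - Ψ.mulVec x') i * Ψ.mulVec (x - x') i := by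
    rw [Matrix.mulVec_transpose]
    exact (Matrix.dotProduct_mulVec _ _ _).symm
  rw [hcross, Finset.mul_sum, ← Finset.sum_sub_distrib, ← Finset.sum_sub_distrib]
  refine Finset.sum_congr rfl fun i _ => ?_
  simp only [Matrix.mulVec_sub, Pi.sub_apply]
  ring

theorem le_least_squares_gap_of_curvature (Ψ : Matrix ι κ ℝ) (y : ι → ℝ)
    (x x' : κ → ℝ) (m C : ℝ)
    (hlow : C * ((∑ i, |x i - x' i|) * ⨆ i, |x i - x' i|) ≤
      (1 / m) * ∑ i, (Ψ.mulVec (x - x') i) ^ 2) :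
    C / 2 * ((∑ i, |x i - x' i|) * ⨆ i, |x i - x' i|) -
        (⨆ j, |Ψ.transpose.mulVec (y - Ψ.mulVec x') j / m|) * ∑ i, |x i - x' i| ≤
      (1 / (2 * m)) * ∑ i, (y i - Ψ.mulVec x i) ^ 2 -
        (1 / (2 * m)) * ∑ i, (y i - Ψ.mulVec x' i) ^ 2 := by
  have hgap := sum_sq_sub_mulVec_sub_sum_sq_sub_mulVec Ψ y x x'
  simp only [Pi.sub_apply] at hgap
  set a := Ψ.transpose.mulVec (y - Ψ.mulVec x')
  have hlin : ∑ j, a j / m * (x j - x' j) ≤ (⨆ j, |a j / m|) * ∑ j, |x j - x' j| :=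
    sum_mul_le_iSup_abs_mul_sum_abs (fun j => a j / m) (fun j => x j - x' j)
  have hdiv : ∑ j, a j / m * (x j - x' j) = 1 / m * ∑ j, a j * (x j - x' j) := by
    rw [Finset.mul_sum]
    exact Finset.sum_congr rfl fun j _ => by ring
  calc C / 2 * ((∑ i, |x i - x' i|) * ⨆ i, |x i - x' i|) - (⨆ j, |a j / m|) * ∑ i, |x i - x' i|
      ≤ 1 / 2 * (1 / m * ∑ i, (Ψ.mulVec (x - x') i) ^ 2) - ∑ j, a j / m * (x j - x' j) := by
        linarith
    _ = _ := by
        rw [hdiv, ← mul_sub, hgap]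
        ring

end Vectors

theorem linf_error_bound_from_gap_general (m n s : ℕ)
    (Ψ : Matrix (Fin m) (Fin n) ℝ) (y : Fin m → ℝ)
    (Cst : ℝ) (hCst : 0 < Cst)
    (hlow : ∀ v : Fin n → ℝ, (Finset.univ.filter fun i => v i ≠ 0).card ≤ 2 * s →
      Cst * ((∑ i, |v i|) * (⨆ i, |v i|)) ≤ (1 / (m : ℝ)) * ∑ i, (Ψ.mulVec v i) ^ 2)
    (xtil x : Fin n → ℝ)
    (hxtil : (Finset.univ.filter fun i => xtil i ≠ 0).card ≤ s)
    (hx : (Finset.univ.filter fun i => x i ≠ 0).card ≤ s)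
    (hbig : 2 * (⨆ j, |Ψ.transpose.mulVec (y - Ψ.mulVec xtil) j / m|) / Cst ≤
      (⨆ i, |x i - xtil i|)) :
    (Cst / 2 * (⨆ i, |x i - xtil i|) ^ 2 -
      (⨆ j, |Ψ.transpose.mulVec (y - Ψ.mulVec xtil) j / m|) * (⨆ i, |x i - xtil i|) -
      ((1 / (2 * (m : ℝ))) * ∑ i, (y i - Ψ.mulVec x i) ^ 2 -
        (1 / (2 * (m : ℝ))) * ∑ i, (y i - Ψ.mulVec xtil i) ^ 2) ≤ 0) ∧
    (⨆ i, |x i - xtil i|) ≤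
      Real.sqrt (2 * max ((1 / (2 * (m : ℝ))) * ∑ i, (y i - Ψ.mulVec x i) ^ 2 -
        (1 / (2 * (m : ℝ))) * ∑ i, (y i - Ψ.mulVec xtil i) ^ 2) 0 / Cst) +
      2 * (⨆ j, |Ψ.transpose.mulVec (y - Ψ.mulVec xtil) j / m|) / Cst := by
  have hsupp : (Finset.univ.filter fun i => (x - xtil) i ≠ 0).card ≤ 2 * s :=
    (card_filter_sub_ne_zero_le x xtil).trans (by omega)
  have hcurv := hlow (x - xtil) hsupp
  simp only [Pi.sub_apply] at hcurv
  have hr : (⨆ j, |Ψ.transpose.mulVec (y - Ψ.mulVec xtil) j / m|) ≤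
      Cst / 2 * ⨆ i, |x i - xtil i| := by
    rw [div_le_iff₀ hCst] at hbig
    linarith
  have hquad := quadratic_nonpos_of_mul_le_sub (iSup_abs_le_sum_abs fun i => x i - xtil i) hr
    (le_least_squares_gap_of_curvature Ψ y x xtil m Cst hcurv)
  exact ⟨hquad, le_sqrt_add_of_quadratic_nonpos hCst
    (Real.iSup_nonneg fun _ => abs_nonneg _) hquad⟩

theorem linf_error_bound_from_gap (m n s : ℕ) (hm : 0 < m)
    (Ψ : Matrix (Fin m) (Fin n) ℝ) (y : Fin m → ℝ)
    (Cst : ℝ) (hCst : 0 < Cst)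
    (hlow : ∀ v : Fin n → ℝ, (Finset.univ.filter fun i => v i ≠ 0).card ≤ 2 * s →
      Cst * ((∑ i, |v i|) * (⨆ i, |v i|)) ≤ (1 / (m : ℝ)) * ∑ i, (Ψ.mulVec v i) ^ 2)
    (xtil x : Fin n → ℝ)
    (hxtil : (Finset.univ.filter fun i => xtil i ≠ 0).card ≤ s)
    (hx : (Finset.univ.filter fun i => x i ≠ 0).card ≤ s)
    (hbig : 2 * (⨆ j, |Ψ.transpose.mulVec (y - Ψ.mulVec xtil) j / m|) / Cst ≤
      (⨆ i, |x i - xtil i|)) :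
    (Cst / 2 * (⨆ i, |x i - xtil i|) ^ 2 -
      (⨆ j, |Ψ.transpose.mulVec (y - Ψ.mulVec xtil) j / m|) * (⨆ i, |x i - xtil i|) -
      ((1 / (2 * (m : ℝ))) * ∑ i, (y i - Ψ.mulVec x i) ^ 2 -
        (1 / (2 * (m : ℝ))) * ∑ i, (y i - Ψ.mulVec xtil i) ^ 2) ≤ 0) ∧
    (⨆ i, |x i - xtil i|) ≤
      Real.sqrt (2 * max ((1 / (2 * (m : ℝ))) * ∑ i, (y i - Ψ.mulVec x i) ^ 2 -
        (1 / (2 * (m : ℝ))) * ∑ i, (y i - Ψ.mulVec xtil i) ^ 2) 0 / Cst) +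
      2 * (⨆ j, |Ψ.transpose.mulVec (y - Ψ.mulVec xtil) j / m|) / Cst :=
  linf_error_bound_from_gap_general m n s Ψ y Cst hCst hlow xtil x hxtil hx hbig
end
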